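/- arXiv:1906.09411 — 3 statements merged into one kernel-verified Lean document; each statement's English description precedes it below -/
import Mathlib

section
/- Let d, m ≥ 1, let b : ℝ^d → ℝ^d and σ : ℝ^d → ℝ^{d×m} be continuous, and let V : ℝ^d → ℝ be twice continuously differentiable. Assume: (a) V has compact level sets; (b) the function x ↦ |σ(x)ᵀ∇V(x)| has compact level sets; (c) for every θ ∈ (0,1), −LV − (θ/2)|σᵀ∇V|² ∼ |σᵀ∇V|². Then for every θ ∈ (0,1) there exists ε₀ ∈ (0, θ/2) such that for every ε ∈ (0, ε₀], setting W = e^{θV}, 𝒲 = e^{εV} and Ψ = −(LW)/W, one has: (i) Ψ = θ(−LV − (θ/2)|σᵀ∇V|²) and Ψ has compact level sets; (ii) Ψ ∼ |σᵀ∇V|²; (iii) there exists C₁ > 0 with 𝒲² ≤ C₁ W pointwise; (iv) Ψ ∼ −(L𝒲)/𝒲; (v) there exists C₂ ∈ ℝ with −2(L𝒲)/𝒲 ≤ Ψ + C₂ pointwise. -/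
open Real Matrix MeasureTheory Filter Topology
open scoped BigOperators ENNReal

/-- Partial derivative in direction `i`. -/
noncomputable def pd {d : ℕ} (i : Fin d) (φ : EuclideanSpace ℝ (Fin d) → ℝ)
    (x : EuclideanSpace ℝ (Fin d)) : ℝ :=
  fderiv ℝ φ x (EuclideanSpace.single i 1)

/-- Generator of the diffusion: `Lφ = b·∇φ + S : ∇²φ` with `S = σσᵀ/2`. -/
noncomputable def gen {d m : ℕ}
    (b : EuclideanSpace ℝ (Fin d) → EuclideanSpace ℝ (Fin d))
    (σ : EuclideanSpace ℝ (Fin d) → Matrix (Fin d) (Fin m) ℝ)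
    (φ : EuclideanSpace ℝ (Fin d) → ℝ) (x : EuclideanSpace ℝ (Fin d)) : ℝ :=
  (∑ i, b x i * pd i φ x) +
    ∑ i, ∑ j, ((σ x * (σ x)ᵀ) i j / 2) * pd j (pd i φ) x

/-- `|σᵀ∇V|²`. -/
noncomputable def sigmaGradSq {d m : ℕ}
    (σ : EuclideanSpace ℝ (Fin d) → Matrix (Fin d) (Fin m) ℝ)
    (V : EuclideanSpace ℝ (Fin d) → ℝ) (x : EuclideanSpace ℝ (Fin d)) : ℝ :=
  ∑ k : Fin m, (∑ i, σ x i k * pd i V x) ^ 2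

/-- `f` has compact level sets. -/
def HasCompactLevelSets {α : Type*} [TopologicalSpace α] (f : α → ℝ) : Prop :=
  ∀ M : ℝ, IsCompact {x | f x ≤ M}

/-- `f ∼ g` : there exist `c, c' > 0` and `R, R'` with `c' g − R' ≤ f ≤ c g + R`. -/
def EquivGrowth {α : Type*} (f g : α → ℝ) : Prop :=
  ∃ c c' R R' : ℝ, 0 < c ∧ 0 < c' ∧ ∀ x, c' * g x - R' ≤ f x ∧ f x ≤ c * g x + R

/-! The chain rule for the generator, `L(g ∘ V) = g'(V) LV + ½ g''(V) |σᵀ∇V|²`, gives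
`-L(e^{tV})/e^{tV} = t(-LV - (t/2)|σᵀ∇V|²)` for every `t`. So `Ψ` and `-L𝒲/𝒲` are positive
multiples of the functions in hypothesis (c) at `θ` and at `ε`, and all claims follow from (c),
the lower bound of `V` and, for (v), an elementary inequality which holds once
`ε ≤ min (θ/4) (c'/2)`, `c'` being the lower growth constant of (c) at `θ`. -/

section Generator

variable {d m : ℕ} {b : EuclideanSpace ℝ (Fin d) → EuclideanSpace ℝ (Fin d)}
  {σ : EuclideanSpace ℝ (Fin d) → Matrix (Fin d) (Fin m) ℝ} {V : EuclideanSpace ℝ (Fin d) → ℝ}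

theorem contDiff_pd (hV : ContDiff ℝ 2 V) (i : Fin d) : ContDiff ℝ 1 (pd i V) :=
  (hV.fderiv_right (m := 1) (by norm_num)).clm_apply contDiff_const

theorem continuous_pd_pd (hV : ContDiff ℝ 2 V) (i j : Fin d) : Continuous (pd j (pd i V)) :=
  (((contDiff_pd hV i).fderiv_right (m := 0) le_rfl).clm_apply contDiff_const).continuous

theorem pd_comp {g : ℝ → ℝ} (hg : Differentiable ℝ g) (hV : Differentiable ℝ V) (i : Fin d)
    (x : EuclideanSpace ℝ (Fin d)) : pd i (g ∘ V) x = deriv g (V x) * pd i V x := by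
  simp only [pd, ((hg (V x)).hasDerivAt.comp_hasFDerivAt x (hV x).hasFDerivAt).fderiv,
    _root_.smul_apply, smul_eq_mul]

theorem pd_pd_comp {g : ℝ → ℝ} (hg : Differentiable ℝ g) (hg' : Differentiable ℝ (deriv g))
    (hV : ContDiff ℝ 2 V) (i j : Fin d) (x : EuclideanSpace ℝ (Fin d)) :
    pd j (pd i (g ∘ V)) x
      = deriv (deriv g) (V x) * pd j V x * pd i V x + deriv g (V x) * pd j (pd i V) x := by
  have hV₁ : Differentiable ℝ V := hV.differentiable (by norm_num)
  have hpd : pd i (g ∘ V) = (deriv g ∘ V) * pd i V := funext (pd_comp hg hV₁ i)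
  rw [hpd, pd, fderiv_mul ((hg' (V x)).comp x (hV₁ x))
    ((contDiff_pd hV i).differentiable one_ne_zero x)]
  simp only [_root_.add_apply, _root_.smul_apply, smul_eq_mul]
  rw [← pd, ← pd, pd_comp hg' hV₁]
  simp only [Function.comp_apply]
  ring

theorem sigmaGradSq_eq_sum (x : EuclideanSpace ℝ (Fin d)) :
    sigmaGradSq σ V x = ∑ i, ∑ j, (σ x * (σ x)ᵀ) i j * (pd j V x * pd i V x) := by
  simp only [sigmaGradSq, Matrix.mul_apply, Matrix.transpose_apply, sq, Finset.sum_mul,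
    Finset.mul_sum]
  rw [Finset.sum_comm]
  refine Finset.sum_congr rfl fun i _ => ?_
  rw [Finset.sum_comm]
  exact Finset.sum_congr rfl fun j _ => Finset.sum_congr rfl fun k _ => by ring

theorem gen_comp {g : ℝ → ℝ} (hg : Differentiable ℝ g) (hg' : Differentiable ℝ (deriv g))
    (hV : ContDiff ℝ 2 V) (x : EuclideanSpace ℝ (Fin d)) :
    gen b σ (g ∘ V) x
      = deriv g (V x) * gen b σ V x + deriv (deriv g) (V x) / 2 * sigmaGradSq σ V x := by
  simp only [gen, pd_comp hg (hV.differentiable (by norm_num)), pd_pd_comp hg hg' hV,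
    sigmaGradSq_eq_sum, mul_add, Finset.mul_sum, Finset.sum_add_distrib]
  rw [add_assoc, add_comm (∑ i, ∑ j, _ * (deriv (deriv g) (V x) * _ * _))]
  congr 1
  · exact Finset.sum_congr rfl fun i _ => by ring
  congr 1 <;> exact Finset.sum_congr rfl fun i _ => Finset.sum_congr rfl fun j _ => by ring

theorem deriv_exp_const_mul (t : ℝ) :
    deriv (fun s => Real.exp (t * s)) = fun s => t * Real.exp (t * s) := by
  funext s
  rw [((hasDerivAt_id' s).const_mul t).exp.deriv]
  ring

theorem neg_gen_exp_div_exp (hV : ContDiff ℝ 2 V) (t : ℝ) (x : EuclideanSpace ℝ (Fin d)) :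
    -gen b σ (fun y => Real.exp (t * V y)) x / Real.exp (t * V x)
      = t * (-gen b σ V x - t / 2 * sigmaGradSq σ V x) := by
  have hexp : Differentiable ℝ fun s => Real.exp (t * s) := by fun_prop
  have hexp' : Differentiable ℝ (deriv fun s => Real.exp (t * s)) := by
    rw [deriv_exp_const_mul]; fun_prop
  have hderiv₂ : deriv (deriv fun s => Real.exp (t * s)) (V x) = t ^ 2 * Real.exp (t * V x) := by
    simp only [deriv_exp_const_mul, deriv_const_mul_field']
    ring
  rw [show (fun y => Real.exp (t * V y)) = (fun s => Real.exp (t * s)) ∘ V from rfl,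
    gen_comp hexp hexp' hV, hderiv₂, deriv_exp_const_mul]
  field_simp
  ring

theorem continuous_gen (hb : Continuous b) (hσ : Continuous σ) (hV : ContDiff ℝ 2 V) :
    Continuous (gen b σ V) := by
  have hpd := fun i => (contDiff_pd hV i).continuous
  have hpd₂ := continuous_pd_pd hV
  unfold gen
  fun_prop

theorem continuous_sigmaGradSq (hσ : Continuous σ) (hV : ContDiff ℝ 2 V) :
    Continuous (sigmaGradSq σ V) := by
  have hpd := fun i => (contDiff_pd hV i).continuous
  unfold sigmaGradSq
  fun_prop

theorem sigmaGradSq_nonneg (x : EuclideanSpace ℝ (Fin d)) : 0 ≤ sigmaGradSq σ V x :=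
  Finset.sum_nonneg fun _ _ => sq_nonneg _

end Generator

namespace EquivGrowth

variable {α : Type*} {f g h : α → ℝ}

theorem symm (hfg : EquivGrowth f g) : EquivGrowth g f := by
  obtain ⟨c, c', R, R', hc, hc', hb⟩ := hfg
  refine ⟨1 / c', 1 / c, R' / c', R / c, by positivity, by positivity, fun x => ⟨?_, ?_⟩⟩
  · rw [div_mul_eq_mul_div, one_mul, div_sub_div_same, div_le_iff₀ hc]
    linarith [(hb x).2]
  · rw [div_mul_eq_mul_div, one_mul, ← add_div, le_div_iff₀ hc']
    linarith [(hb x).1]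

theorem trans (hfg : EquivGrowth f g) (hgh : EquivGrowth g h) : EquivGrowth f h := by
  obtain ⟨c, c', R, R', hc, hc', hb₁⟩ := hfg
  obtain ⟨a, a', S, S', ha, ha', hb₂⟩ := hgh
  refine ⟨c * a, c' * a', c * S + R, c' * S' + R', by positivity, by positivity,
    fun x => ⟨?_, ?_⟩⟩
  · nlinarith [(hb₁ x).1, mul_le_mul_of_nonneg_left (hb₂ x).1 hc'.le]
  · nlinarith [(hb₁ x).2, mul_le_mul_of_nonneg_left (hb₂ x).2 hc.le]

theorem const_mul {t : ℝ} (ht : 0 < t) (hfg : EquivGrowth f g) :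
    EquivGrowth (fun x => t * f x) g := by
  obtain ⟨c, c', R, R', hc, hc', hb⟩ := hfg
  refine ⟨t * c, t * c', t * R, t * R', by positivity, by positivity, fun x => ⟨?_, ?_⟩⟩
  · nlinarith [(hb x).1]
  · nlinarith [(hb x).2]

theorem hasCompactLevelSets [TopologicalSpace α] (hfg : EquivGrowth f g)
    (hg : HasCompactLevelSets g) (hf : Continuous f) : HasCompactLevelSets f := by
  obtain ⟨c, c', R, R', -, hc', hb⟩ := hfg
  intro M
  refine (hg ((M + R') / c')).of_isClosed_subset (isClosed_le hf continuous_const) ?_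
  intro x hx
  rw [Set.mem_ofPred_eq, le_div_iff₀ hc']
  linarith [(hb x).1, hx.out]

end EquivGrowth

namespace HasCompactLevelSets

variable {α : Type*} [TopologicalSpace α] {f : α → ℝ}

theorem of_sqrt (hf : HasCompactLevelSets fun x => √(f x)) (hfc : Continuous f) :
    HasCompactLevelSets f := fun M =>
  (hf √M).of_isClosed_subset (isClosed_le hfc continuous_const)
    fun _ hx => Real.sqrt_le_sqrt hx.out

theorem exists_forall_le (hf : HasCompactLevelSets f) (hfc : Continuous f) :
    ∃ K, ∀ x, K ≤ f x := by
  rcases {x | f x ≤ 0}.eq_empty_or_nonempty with hempty | hne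
  · exact ⟨0, fun x => not_lt.mp fun hx => hempty.subset hx.le⟩
  · obtain ⟨x₀, hx₀, hmin⟩ := (hf 0).exists_isMinOn hne hfc.continuousOn
    refine ⟨f x₀, fun x => ?_⟩
    by_cases hx : f x ≤ 0
    · exact hmin hx
    · linarith [not_le.mp hx, hx₀.out]

end HasCompactLevelSets

theorem exp_mul_sq_le {K v ε θ : ℝ} (hK : K ≤ v) (hεθ : 2 * ε ≤ θ) :
    Real.exp (ε * v) ^ 2 ≤ Real.exp ((2 * ε - θ) * K) * Real.exp (θ * v) := by
  rw [sq, ← Real.exp_add, ← Real.exp_add, Real.exp_le_exp]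
  nlinarith

/-- With `ℓ = -LV` and `G = |σᵀ∇V|²`, this compares `-2 L𝒲/𝒲 = 2ε(ℓ - ε G/2)` with
`Ψ = θ(ℓ - θ G/2)`. -/
theorem two_mul_rate_le_rate_add {ℓ G c R θ ε : ℝ} (hG : 0 ≤ G) (hε : 0 ≤ ε)
    (hεθ : ε ≤ θ / 4) (hεc : ε ≤ c / 2) (h : c * G - R ≤ ℓ - θ / 2 * G) :
    2 * (ε * (ℓ - ε / 2 * G)) ≤ θ * (ℓ - θ / 2 * G) + (θ - 2 * ε) * R := by
  have hθ : 0 ≤ θ / 4 - ε := by linarith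
  have hc : 0 ≤ c / 2 - ε := by linarith
  nlinarith [mul_le_mul_of_nonneg_left h (by linarith : 0 ≤ θ - 2 * ε),
    mul_nonneg (mul_nonneg hε hθ) hG, mul_nonneg (mul_nonneg hε hc) hG,
    mul_nonneg (mul_nonneg hθ hc) hG, mul_nonneg (mul_nonneg hε hε) hG]

theorem stmt0_general (d m : ℕ)
    (b : EuclideanSpace ℝ (Fin d) → EuclideanSpace ℝ (Fin d))
    (σ : EuclideanSpace ℝ (Fin d) → Matrix (Fin d) (Fin m) ℝ)
    (hb : Continuous b) (hσ : Continuous σ)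
    (V : EuclideanSpace ℝ (Fin d) → ℝ) (hV : ContDiff ℝ 2 V)
    (hVlev : HasCompactLevelSets V)
    (hσVlev : HasCompactLevelSets (fun x => Real.sqrt (sigmaGradSq σ V x)))
    (hequiv : ∀ θ : ℝ, θ ∈ Set.Ioo (0:ℝ) 1 →
      EquivGrowth (fun x => -(gen b σ V x) - θ / 2 * sigmaGradSq σ V x)
        (fun x => sigmaGradSq σ V x)) :
    ∀ θ : ℝ, θ ∈ Set.Ioo (0:ℝ) 1 → ∃ ε₀ : ℝ, 0 < ε₀ ∧ ε₀ < θ / 2 ∧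
      ∀ ε : ℝ, ε ∈ Set.Ioc (0:ℝ) ε₀ →
        -- (i) identity for Ψ and compact level sets of Ψ
        (∀ x, -(gen b σ (fun y => Real.exp (θ * V y)) x) / Real.exp (θ * V x)
            = θ * (-(gen b σ V x) - θ / 2 * sigmaGradSq σ V x)) ∧
        HasCompactLevelSets
          (fun x => -(gen b σ (fun y => Real.exp (θ * V y)) x) / Real.exp (θ * V x)) ∧
        -- (ii) Ψ ∼ |σᵀ∇V|²
        EquivGrowth
          (fun x => -(gen b σ (fun y => Real.exp (θ * V y)) x) / Real.exp (θ * V x))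
          (fun x => sigmaGradSq σ V x) ∧
        -- (iii) 𝒲² ≤ C₁ W
        (∃ C₁ : ℝ, 0 < C₁ ∧
          ∀ x, (Real.exp (ε * V x)) ^ 2 ≤ C₁ * Real.exp (θ * V x)) ∧
        -- (iv) Ψ ∼ −(L𝒲)/𝒲
        EquivGrowth
          (fun x => -(gen b σ (fun y => Real.exp (θ * V y)) x) / Real.exp (θ * V x))
          (fun x => -(gen b σ (fun y => Real.exp (ε * V y)) x) / Real.exp (ε * V x)) ∧
        -- (v) −2(L𝒲)/𝒲 ≤ Ψ + C₂
        (∃ C₂ : ℝ, ∀ x,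
          -2 * gen b σ (fun y => Real.exp (ε * V y)) x / Real.exp (ε * V x)
            ≤ -(gen b σ (fun y => Real.exp (θ * V y)) x) / Real.exp (θ * V x) + C₂) := by
  rintro θ ⟨hθ0, hθ1⟩
  have hΨ (t : ℝ) : (fun x => -gen b σ (fun y => Real.exp (t * V y)) x / Real.exp (t * V x))
      = fun x => t * (-gen b σ V x - t / 2 * sigmaGradSq σ V x) :=
    funext (neg_gen_exp_div_exp hV t)
  obtain ⟨_, c', _, R', -, hc', hbd⟩ := hequiv θ ⟨hθ0, hθ1⟩
  obtain ⟨K, hK⟩ := hVlev.exists_forall_le hV.continuous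
  refine ⟨min (θ / 4) (c' / 2), by positivity, by linarith [min_le_left (θ / 4) (c' / 2)],
    fun ε ⟨hε0, hεε₀⟩ => ?_⟩
  have hεθ : ε ≤ θ / 4 := hεε₀.trans (min_le_left _ _)
  have hεc : ε ≤ c' / 2 := hεε₀.trans (min_le_right _ _)
  have hΨθ_G := hΨ θ ▸ (hequiv θ ⟨hθ0, hθ1⟩).const_mul hθ0
  have hΨε_G := hΨ ε ▸ (hequiv ε ⟨hε0, by linarith⟩).const_mul hε0
  have hgen := continuous_gen hb hσ hV
  have hG := continuous_sigmaGradSq hσ hV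
  refine ⟨neg_gen_exp_div_exp hV θ,
    hΨθ_G.hasCompactLevelSets (hσVlev.of_sqrt hG) (by rw [hΨ θ]; fun_prop),
    hΨθ_G, ⟨_, Real.exp_pos _, fun x => exp_mul_sq_le (hK x) (by linarith)⟩,
    hΨθ_G.trans hΨε_G.symm, ⟨(θ - 2 * ε) * R', fun x => ?_⟩⟩
  rw [mul_div_assoc, neg_mul, ← mul_neg, ← neg_div, neg_gen_exp_div_exp hV,
    neg_gen_exp_div_exp hV]
  exact two_mul_rate_le_rate_add (sigmaGradSq_nonneg x) hε0.le hεθ hεc (hbd x).1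

/-- Proposition `prop:nonlin` of Ferré–Stoltz. Under a nonlinear Lyapunov
condition on `V`, the Witten–Lyapunov assumptions hold for `W = e^{θV}` and `𝒲 = e^{εV}`. -/
theorem stmt0 (d m : ℕ) (hd : 1 ≤ d) (hm : 1 ≤ m)
    (b : EuclideanSpace ℝ (Fin d) → EuclideanSpace ℝ (Fin d))
    (σ : EuclideanSpace ℝ (Fin d) → Matrix (Fin d) (Fin m) ℝ)
    (hb : Continuous b) (hσ : Continuous σ)
    (V : EuclideanSpace ℝ (Fin d) → ℝ) (hV : ContDiff ℝ 2 V)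
    (hVlev : HasCompactLevelSets V)
    (hσVlev : HasCompactLevelSets (fun x => Real.sqrt (sigmaGradSq σ V x)))
    (hequiv : ∀ θ : ℝ, θ ∈ Set.Ioo (0:ℝ) 1 →
      EquivGrowth (fun x => -(gen b σ V x) - θ / 2 * sigmaGradSq σ V x)
        (fun x => sigmaGradSq σ V x)) :
    ∀ θ : ℝ, θ ∈ Set.Ioo (0:ℝ) 1 → ∃ ε₀ : ℝ, 0 < ε₀ ∧ ε₀ < θ / 2 ∧
      ∀ ε : ℝ, ε ∈ Set.Ioc (0:ℝ) ε₀ →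
        -- (i) identity for Ψ and compact level sets of Ψ
        (∀ x, -(gen b σ (fun y => Real.exp (θ * V y)) x) / Real.exp (θ * V x)
            = θ * (-(gen b σ V x) - θ / 2 * sigmaGradSq σ V x)) ∧
        HasCompactLevelSets
          (fun x => -(gen b σ (fun y => Real.exp (θ * V y)) x) / Real.exp (θ * V x)) ∧
        -- (ii) Ψ ∼ |σᵀ∇V|²
        EquivGrowth
          (fun x => -(gen b σ (fun y => Real.exp (θ * V y)) x) / Real.exp (θ * V x))
          (fun x => sigmaGradSq σ V x) ∧
        -- (iii) 𝒲² ≤ C₁ W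
        (∃ C₁ : ℝ, 0 < C₁ ∧
          ∀ x, (Real.exp (ε * V x)) ^ 2 ≤ C₁ * Real.exp (θ * V x)) ∧
        -- (iv) Ψ ∼ −(L𝒲)/𝒲
        EquivGrowth
          (fun x => -(gen b σ (fun y => Real.exp (θ * V y)) x) / Real.exp (θ * V x))
          (fun x => -(gen b σ (fun y => Real.exp (ε * V y)) x) / Real.exp (ε * V x)) ∧
        -- (v) −2(L𝒲)/𝒲 ≤ Ψ + C₂
        (∃ C₂ : ℝ, ∀ x,
          -2 * gen b σ (fun y => Real.exp (ε * V y)) x / Real.exp (ε * V x)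
            ≤ -(gen b σ (fun y => Real.exp (θ * V y)) x) / Real.exp (θ * V x) + C₂) :=
  stmt0_general d m b σ hb hσ V hV hVlev hσVlev hequiv
end

section
/- Let d, m ≥ 1, let b : ℝ^d → ℝ^d and σ : ℝ^d → ℝ^{d×m} be continuous, let V : ℝ^d → ℝ be twice continuously differentiable, fix θ ∈ (0,1), set W = e^{θV} and Ψ = −(LW)/W = θ(−LV − (θ/2)|σᵀ∇V|²), and assume there exist c* > 0 and R* ∈ ℝ with |σᵀ∇V|² ≤ c* Ψ + R* pointwise. Let κ : ℝ^d → [1, ∞) be twice continuously differentiable and suppose there exists C ≥ 0 such that Lκ ≤ Cκ and |σᵀ∇(log κ)| ≤ C pointwise. Then there exists c ∈ ℝ such that L(κW) ≤ c κW pointwise on ℝ^d. -/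
open Real Matrix MeasureTheory Filter Topology
open scoped BigOperators ENNReal

/-!
Write `W = e^{θV}`. The product rule for the generator gives
`L(κW) = κ LW + W Lκ + Γ(κ, W)` with the carré du champ `Γ(f, g) = (σᵀ∇f)·(σᵀ∇g)`,
and `Γ(κ, W) = θ W Γ(κ, V)`. Dividing by `κW`:
* `LW / W = -Ψ ≤ (R* - |σᵀ∇V|²) / c*` by the control hypothesis,
* `Lκ / κ ≤ C`,
* `θ Γ(κ, V) / κ ≤ θ |σᵀ∇ log κ| |σᵀ∇V| ≤ θ C |σᵀ∇V|` by Cauchy–Schwarz.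
The negative term `-|σᵀ∇V|² / c*` absorbs the linear one `θ C |σᵀ∇V|` (Young's inequality),
leaving the constant `R*/c* + C + (θC)² c*/4`.
-/

noncomputable def sigmaGrad {d m : ℕ}
    (σ : EuclideanSpace ℝ (Fin d) → Matrix (Fin d) (Fin m) ℝ)
    (φ : EuclideanSpace ℝ (Fin d) → ℝ) (x : EuclideanSpace ℝ (Fin d)) : Fin m → ℝ :=
  (σ x)ᵀ *ᵥ fun i => pd i φ x

section Calculus

variable {d : ℕ} {f g : EuclideanSpace ℝ (Fin d) → ℝ} {x : EuclideanSpace ℝ (Fin d)}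

lemma pd_eq_of_hasFDerivAt {f' : EuclideanSpace ℝ (Fin d) →L[ℝ] ℝ} (h : HasFDerivAt f f' x)
    (i : Fin d) : pd i f x = f' (EuclideanSpace.single i 1) := by
  rw [pd, h.fderiv]

lemma pd_add (i : Fin d) (hf : DifferentiableAt ℝ f x) (hg : DifferentiableAt ℝ g x) :
    pd i (fun y => f y + g y) x = pd i f x + pd i g x := by
  simp [pd_eq_of_hasFDerivAt (hf.hasFDerivAt.fun_add hg.hasFDerivAt),
    pd_eq_of_hasFDerivAt hf.hasFDerivAt, pd_eq_of_hasFDerivAt hg.hasFDerivAt]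

lemma pd_mul (i : Fin d) (hf : DifferentiableAt ℝ f x) (hg : DifferentiableAt ℝ g x) :
    pd i (fun y => f y * g y) x = f x * pd i g x + g x * pd i f x := by
  simp [pd_eq_of_hasFDerivAt (hf.hasFDerivAt.fun_mul hg.hasFDerivAt),
    pd_eq_of_hasFDerivAt hf.hasFDerivAt, pd_eq_of_hasFDerivAt hg.hasFDerivAt]

lemma pd_exp_const_mul (θ : ℝ) (i : Fin d) (hf : DifferentiableAt ℝ f x) :
    pd i (fun y => exp (θ * f y)) x = θ * exp (θ * f x) * pd i f x := by
  simp [pd_eq_of_hasFDerivAt ((hf.hasFDerivAt.const_mul θ).exp),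
    pd_eq_of_hasFDerivAt hf.hasFDerivAt]
  ring

lemma pd_log (i : Fin d) (hf : DifferentiableAt ℝ f x) (hx : f x ≠ 0) :
    pd i (fun y => log (f y)) x = pd i f x / f x := by
  simp [pd_eq_of_hasFDerivAt (hf.hasFDerivAt.log hx), pd_eq_of_hasFDerivAt hf.hasFDerivAt]
  ring

lemma ContDiff.differentiable_pd (hf : ContDiff ℝ 2 f) (i : Fin d) : Differentiable ℝ (pd i f) :=
  ((hf.fderiv_right le_rfl).differentiable one_ne_zero).clm_apply (differentiable_const _)

lemma pd_pd_mul (i j : Fin d) (hf : ContDiff ℝ 2 f) (hg : ContDiff ℝ 2 g) :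
    pd j (pd i (fun y => f y * g y)) x
      = f x * pd j (pd i g) x + g x * pd j (pd i f) x
        + (pd i f x * pd j g x + pd j f x * pd i g x) := by
  have hfd : Differentiable ℝ f := hf.differentiable two_ne_zero
  have hgd : Differentiable ℝ g := hg.differentiable two_ne_zero
  have hpd : pd i (fun y => f y * g y) = fun y => f y * pd i g y + g y * pd i f y :=
    funext fun y => pd_mul i (hfd y) (hgd y)
  rw [hpd, pd_add (f := fun y => f y * pd i g y) (g := fun y => g y * pd i f y) j
      ((hfd x).mul (hg.differentiable_pd i x)) ((hgd x).mul (hf.differentiable_pd i x)),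
    pd_mul j (hfd x) (hg.differentiable_pd i x), pd_mul j (hgd x) (hf.differentiable_pd i x)]
  ring

end Calculus

lemma Matrix.sum_mul_transpose_mul_symm {ι κ : Type*} [Fintype ι] [Fintype κ]
    (s : Matrix ι κ ℝ) (a v : ι → ℝ) :
    ∑ i, ∑ j, (s * sᵀ) i j / 2 * (a i * v j + a j * v i) = (sᵀ *ᵥ a) ⬝ᵥ (sᵀ *ᵥ v) := by
  have hsym : ∑ i, ∑ j, (s * sᵀ) i j * (a j * v i) = ∑ i, ∑ j, (s * sᵀ) i j * (a i * v j) := by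
    rw [Finset.sum_comm]
    exact Finset.sum_congr rfl fun i _ => Finset.sum_congr rfl fun j _ => by
      rw [← transpose_apply (s * sᵀ), transpose_mul, transpose_transpose]
  calc ∑ i, ∑ j, (s * sᵀ) i j / 2 * (a i * v j + a j * v i)
      = (∑ i, ∑ j, (s * sᵀ) i j * (a i * v j) + ∑ i, ∑ j, (s * sᵀ) i j * (a j * v i)) / 2 := by
        simp only [← Finset.sum_add_distrib, Finset.sum_div]
        exact Finset.sum_congr rfl fun i _ => Finset.sum_congr rfl fun j _ => by ring
    _ = a ⬝ᵥ (s * sᵀ) *ᵥ v := by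
        rw [hsym, ← two_mul, mul_div_cancel_left₀ _ two_ne_zero]
        simp only [dotProduct, mulVec, Finset.mul_sum]
        exact Finset.sum_congr rfl fun i _ => Finset.sum_congr rfl fun j _ => by ring
    _ = (sᵀ *ᵥ a) ⬝ᵥ (sᵀ *ᵥ v) := by
        simp only [← mulVec_mulVec, dotProduct_mulVec, mulVec_transpose]

section SigmaGrad

variable {d m : ℕ} (σ : EuclideanSpace ℝ (Fin d) → Matrix (Fin d) (Fin m) ℝ)
  {f g : EuclideanSpace ℝ (Fin d) → ℝ} {x : EuclideanSpace ℝ (Fin d)}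

lemma sigmaGradSq_eq_dotProduct : sigmaGradSq σ f x = sigmaGrad σ f x ⬝ᵥ sigmaGrad σ f x := by
  simp only [sigmaGradSq, sq]
  rfl

lemma sigmaGradSq_nonneg_s1 : 0 ≤ sigmaGradSq σ f x :=
  Finset.sum_nonneg fun _ _ => sq_nonneg _

lemma sigmaGrad_dotProduct_le :
    sigmaGrad σ f x ⬝ᵥ sigmaGrad σ g x ≤ √(sigmaGradSq σ f x) * √(sigmaGradSq σ g x) :=
  Real.sum_mul_le_sqrt_mul_sqrt _ _ _

lemma sigmaGrad_exp_const_mul (θ : ℝ) (hf : Differentiable ℝ f) :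
    sigmaGrad σ (fun y => exp (θ * f y)) x = (θ * exp (θ * f x)) • sigmaGrad σ f x := by
  have h : (fun i => pd i (fun y => exp (θ * f y)) x) = (θ * exp (θ * f x)) • fun i => pd i f x :=
    funext fun i => pd_exp_const_mul θ i (hf x)
  rw [sigmaGrad, h, mulVec_smul, sigmaGrad]

lemma sigmaGradSq_log (hf : Differentiable ℝ f) (hx : f x ≠ 0) :
    sigmaGradSq σ (fun y => log (f y)) x = (f x)⁻¹ ^ 2 * sigmaGradSq σ f x := by
  have h : (fun i => pd i (fun y => log (f y)) x) = (f x)⁻¹ • fun i => pd i f x :=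
    funext fun i => (pd_log i (hf x) hx).trans (div_eq_inv_mul _ _)
  rw [sigmaGradSq_eq_dotProduct, sigmaGradSq_eq_dotProduct, sigmaGrad, h, mulVec_smul,
    smul_dotProduct, dotProduct_smul, smul_smul, smul_eq_mul, sq]
  rfl

end SigmaGrad

section Generator

variable {d m : ℕ} (b : EuclideanSpace ℝ (Fin d) → EuclideanSpace ℝ (Fin d))
  (σ : EuclideanSpace ℝ (Fin d) → Matrix (Fin d) (Fin m) ℝ)
  {f g : EuclideanSpace ℝ (Fin d) → ℝ} {x : EuclideanSpace ℝ (Fin d)}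

lemma gen_mul (hf : ContDiff ℝ 2 f) (hg : ContDiff ℝ 2 g) :
    gen b σ (fun y => f y * g y) x
      = f x * gen b σ g x + g x * gen b σ f x + sigmaGrad σ f x ⬝ᵥ sigmaGrad σ g x := by
  have hfd : Differentiable ℝ f := hf.differentiable two_ne_zero
  have hgd : Differentiable ℝ g := hg.differentiable two_ne_zero
  simp only [gen, pd_mul _ (hfd x) (hgd x), pd_pd_mul _ _ hf hg, sigmaGrad,
    ← Matrix.sum_mul_transpose_mul_symm]
  simp only [mul_add, Finset.sum_add_distrib, mul_left_comm _ (f x), mul_left_comm _ (g x),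
    ← Finset.mul_sum]
  ring

lemma gen_mul_exp_le {κ V : EuclideanSpace ℝ (Fin d) → ℝ} (hκ : ContDiff ℝ 2 κ)
    (hV : ContDiff ℝ 2 V) {θ : ℝ} (hθ : 0 ≤ θ) (hκx : 0 < κ x) {q C : ℝ}
    (hLW : gen b σ (fun y => exp (θ * V y)) x ≤ q * exp (θ * V x))
    (hLκ : gen b σ κ x ≤ C * κ x) (hlogκ : √(sigmaGradSq σ (fun y => log (κ y)) x) ≤ C) :
    gen b σ (fun y => κ y * exp (θ * V y)) x
      ≤ (q + C + θ * C * √(sigmaGradSq σ V x)) * (κ x * exp (θ * V x)) := by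
  have hW : ContDiff ℝ 2 fun y => exp (θ * V y) := (contDiff_const.mul hV).exp
  have hsqrtκ : √(sigmaGradSq σ κ x) = κ x * √(sigmaGradSq σ (fun y => log (κ y)) x) := by
    rw [sigmaGradSq_log σ (hκ.differentiable two_ne_zero) hκx.ne', sqrt_mul (sq_nonneg _),
      sqrt_sq (inv_nonneg.2 hκx.le), mul_inv_cancel_left₀ hκx.ne']
  have hΓ : sigmaGrad σ κ x ⬝ᵥ sigmaGrad σ V x ≤ C * κ x * √(sigmaGradSq σ V x) :=
    calc sigmaGrad σ κ x ⬝ᵥ sigmaGrad σ V x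
        ≤ √(sigmaGradSq σ κ x) * √(sigmaGradSq σ V x) := sigmaGrad_dotProduct_le σ
      _ ≤ C * κ x * √(sigmaGradSq σ V x) := by
        rw [hsqrtκ, mul_comm C]
        gcongr
  rw [gen_mul b σ hκ hW, sigmaGrad_exp_const_mul σ θ (hV.differentiable two_ne_zero),
    dotProduct_smul, smul_eq_mul]
  calc κ x * gen b σ (fun y => exp (θ * V y)) x + exp (θ * V x) * gen b σ κ x
        + θ * exp (θ * V x) * (sigmaGrad σ κ x ⬝ᵥ sigmaGrad σ V x)
      ≤ κ x * (q * exp (θ * V x)) + exp (θ * V x) * (C * κ x)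
        + θ * exp (θ * V x) * (C * κ x * √(sigmaGradSq σ V x)) := by
        gcongr
    _ = (q + C + θ * C * √(sigmaGradSq σ V x)) * (κ x * exp (θ * V x)) := by ring

end Generator

lemma mul_le_sq_div_add_sq_mul_div_four {c : ℝ} (hc : 0 < c) (t a : ℝ) :
    t * a ≤ a ^ 2 / c + t ^ 2 * c / 4 := by
  rw [div_add_div _ _ hc.ne' four_ne_zero, le_div_iff₀ (by positivity)]
  nlinarith [sq_nonneg (2 * a - t * c)]

theorem stmt1_general (d m : ℕ)
    (b : EuclideanSpace ℝ (Fin d) → EuclideanSpace ℝ (Fin d))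
    (σ : EuclideanSpace ℝ (Fin d) → Matrix (Fin d) (Fin m) ℝ)
    (V : EuclideanSpace ℝ (Fin d) → ℝ) (hV : ContDiff ℝ 2 V)
    (θ : ℝ) (hθ : θ ∈ Set.Ioo (0:ℝ) 1)
    (hcontrol : ∃ cstar : ℝ, 0 < cstar ∧ ∃ Rstar : ℝ, ∀ x,
      sigmaGradSq σ V x
        ≤ cstar * (-(gen b σ (fun y => Real.exp (θ * V y)) x) / Real.exp (θ * V x)) + Rstar)
    (κ : EuclideanSpace ℝ (Fin d) → ℝ) (hκ1 : ∀ x, 1 ≤ κ x) (hκ : ContDiff ℝ 2 κ)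
    (hκC : ∃ C : ℝ, 0 ≤ C ∧ ∀ x,
      gen b σ κ x ≤ C * κ x ∧
      Real.sqrt (sigmaGradSq σ (fun y => Real.log (κ y)) x) ≤ C) :
    ∃ c : ℝ, ∀ x,
      gen b σ (fun y => κ y * Real.exp (θ * V y)) x ≤ c * (κ x * Real.exp (θ * V x)) := by
  obtain ⟨cs, hcs, Rs, hcontrol⟩ := hcontrol
  obtain ⟨C, -, hκC⟩ := hκC
  refine ⟨Rs / cs + C + (θ * C) ^ 2 * cs / 4, fun x => ?_⟩
  have hLW :
      gen b σ (fun y => exp (θ * V y)) x ≤ (Rs - sigmaGradSq σ V x) / cs * exp (θ * V x) := by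
    have h := hcontrol x
    rw [mul_div_assoc', div_add' _ _ _ (exp_pos _).ne', le_div_iff₀ (exp_pos _)] at h
    rw [div_mul_eq_mul_div, le_div_iff₀ hcs]
    linarith
  have hκx : 0 < κ x := zero_lt_one.trans_le (hκ1 x)
  refine (gen_mul_exp_le b σ hκ hV hθ.1.le hκx hLW (hκC x).1 (hκC x).2).trans
    (mul_le_mul_of_nonneg_right ?_ (by positivity))
  have hyoung := mul_le_sq_div_add_sq_mul_div_four hcs (θ * C) √(sigmaGradSq σ V x)
  rw [sq_sqrt (sigmaGradSq_nonneg_s1 σ)] at hyoung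
  rw [sub_div]
  linarith

/-- If `|σᵀ∇V|² ≤ c* Ψ + R*` with `Ψ = −L(e^{θV})/e^{θV}
= θ(−LV − (θ/2)|σᵀ∇V|²)`, and `κ ≥ 1` satisfies `Lκ ≤ Cκ`, `|σᵀ∇ log κ| ≤ C`, then
`L(κW) ≤ c κW` for some `c`. -/
theorem stmt1 (d m : ℕ) (hd : 1 ≤ d) (hm : 1 ≤ m)
    (b : EuclideanSpace ℝ (Fin d) → EuclideanSpace ℝ (Fin d))
    (σ : EuclideanSpace ℝ (Fin d) → Matrix (Fin d) (Fin m) ℝ)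
    (hb : Continuous b) (hσ : Continuous σ)
    (V : EuclideanSpace ℝ (Fin d) → ℝ) (hV : ContDiff ℝ 2 V)
    (θ : ℝ) (hθ : θ ∈ Set.Ioo (0:ℝ) 1)
    (hΨ : ∀ x, -(gen b σ (fun y => Real.exp (θ * V y)) x) / Real.exp (θ * V x)
        = θ * (-(gen b σ V x) - θ / 2 * sigmaGradSq σ V x))
    (hcontrol : ∃ cstar : ℝ, 0 < cstar ∧ ∃ Rstar : ℝ, ∀ x,
      sigmaGradSq σ V x
        ≤ cstar * (-(gen b σ (fun y => Real.exp (θ * V y)) x) / Real.exp (θ * V x)) + Rstar)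
    (κ : EuclideanSpace ℝ (Fin d) → ℝ) (hκ1 : ∀ x, 1 ≤ κ x) (hκ : ContDiff ℝ 2 κ)
    (hκC : ∃ C : ℝ, 0 ≤ C ∧ ∀ x,
      gen b σ κ x ≤ C * κ x ∧
      Real.sqrt (sigmaGradSq σ (fun y => Real.log (κ y)) x) ≤ C) :
    ∃ c : ℝ, ∀ x,
      gen b σ (fun y => κ y * Real.exp (θ * V y)) x ≤ c * (κ x * Real.exp (θ * V x)) :=
  stmt1_general d m b σ V hV θ hθ hcontrol κ hκ1 hκ hκC
end

section
/- Let V : ℝ^d → ℝ be continuously differentiable and suppose there exist constants c_V > 0 and C_V ∈ ℝ such that q·∇V(q) ≥ c_V |q|² − C_V for all q ∈ ℝ^d. Then for every γ > 0 and every θ ∈ (0,1) there exist ε > 0 and constants a, b, C > 0 such that, setting H(q,p) = V(q) + |p|²/2 and W(q,p) = exp(θ H(q,p) + ε q·p), the function W satisfies −(L_γ W)(q,p)/W(q,p) ≥ a|q|² + b|p|² − C for all (q,p) ∈ ℝ^d × ℝ^d. -/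
/-!
Write `W = exp Φ` with `Φ = θ H + ε q·p`. The chain rule gives `L_γ W / W = L_γ Φ + γ |∇_p Φ|²`,
and since the transport part of `L_γ` annihilates `H`, this is a quadratic polynomial in `(q, p)`
except for the term `-ε q·∇V(q)`, which the confinement hypothesis bounds by
`-ε c_V |q|² + ε C_V`. For small `ε` Young's inequality absorbs the cross term `γ ε (2θ - 1) q·p`
and `γ ε² |q|²` into half of `ε c_V |q|²` and half of the friction gain `γ θ (1 - θ) |p|²`.
-/

open Real MeasureTheory Filter Topology
open scoped BigOperators ENNReal

/-- Partial derivative in the `i`-th position direction of a function of `(q,p)`. -/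
noncomputable def pdq {d : ℕ} (i : Fin d)
    (φ : EuclideanSpace ℝ (Fin d) × EuclideanSpace ℝ (Fin d) → ℝ)
    (x : EuclideanSpace ℝ (Fin d) × EuclideanSpace ℝ (Fin d)) : ℝ :=
  fderiv ℝ φ x (EuclideanSpace.single i 1, 0)

/-- Partial derivative in the `i`-th momentum direction of a function of `(q,p)`. -/
noncomputable def pdp {d : ℕ} (i : Fin d)
    (φ : EuclideanSpace ℝ (Fin d) × EuclideanSpace ℝ (Fin d) → ℝ)
    (x : EuclideanSpace ℝ (Fin d) × EuclideanSpace ℝ (Fin d)) : ℝ :=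
  fderiv ℝ φ x (0, EuclideanSpace.single i 1)

/-- Generator of the underdamped Langevin dynamics:
`L_γ φ = p·∇_q φ − ∇V(q)·∇_p φ + γ(−p·∇_p φ + Δ_p φ)`. -/
noncomputable def Lgamma {d : ℕ} (γ : ℝ) (V : EuclideanSpace ℝ (Fin d) → ℝ)
    (φ : EuclideanSpace ℝ (Fin d) × EuclideanSpace ℝ (Fin d) → ℝ)
    (x : EuclideanSpace ℝ (Fin d) × EuclideanSpace ℝ (Fin d)) : ℝ :=
  (∑ i, x.2 i * pdq i φ x) - (∑ i, pd i V x.1 * pdp i φ x)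
    + γ * ((-∑ i, x.2 i * pdp i φ x) + ∑ i, pdp i (pdp i φ) x)

theorem two_mul_le_mul_sq_add_sq_div {t : ℝ} (ht : 0 < t) (a b : ℝ) :
    2 * a * b ≤ t * a ^ 2 + b ^ 2 / t := by
  have h : 0 ≤ (t * a - b) ^ 2 / t := by positivity
  have hexpand : (t * a - b) ^ 2 / t = t * a ^ 2 + b ^ 2 / t - 2 * a * b := by field_simp; ring
  linarith

theorem abs_sum_mul_le_norm_mul_norm {ι : Type*} [Fintype ι] (u v : EuclideanSpace ℝ ι) :
    |∑ i, u i * v i| ≤ ‖u‖ * ‖v‖ := by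
  have h : inner ℝ v u = ∑ i, u i * v i := by simp [PiLp.inner_apply]
  rw [← h, mul_comm]
  exact abs_real_inner_le_norm v u

theorem drift_lower_bound {γ θ ε cV CV G S nq np : ℝ} (hγ : 0 < γ) (hθ0 : 0 < θ) (hθ1 : θ < 1)
    (hcV : 0 < cV) (hε : 0 < ε) (hεγ : ε ≤ cV / (4 * γ))
    (hεθ : ε ≤ γ * θ * (1 - θ) / (2 * (1 + γ ^ 2 / cV)))
    (hG : cV * nq ^ 2 - CV ≤ G) (hS : |S| ≤ nq * np) :
    ε * cV / 2 * nq ^ 2 + γ * θ * (1 - θ) / 2 * np ^ 2 - ε * |CV|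
      ≤ ε * G - ε * np ^ 2 + γ * θ * (1 - θ) * np ^ 2 - γ * ε * (2 * θ - 1) * S
        - γ * ε ^ 2 * nq ^ 2 := by
  have hγε : γ * ε ≤ cV / 4 := by
    rw [le_div_iff₀ (by positivity)] at hεγ; linarith
  have hεθ' : ε * (1 + γ ^ 2 / cV) ≤ γ * θ * (1 - θ) / 2 := by
    rw [le_div_iff₀ (by positivity)] at hεθ; linarith
  have hS' : (2 * θ - 1) * S ≤ nq * np :=
    calc (2 * θ - 1) * S ≤ |2 * θ - 1| * |S| := by rw [← abs_mul]; exact le_abs_self _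
      _ ≤ 1 * |S| := by gcongr; exact abs_le.2 ⟨by linarith, by linarith⟩
      _ ≤ nq * np := by linarith
  have hcross : γ * ((2 * θ - 1) * S) ≤ cV / 4 * nq ^ 2 + γ ^ 2 / cV * np ^ 2 :=
    calc γ * ((2 * θ - 1) * S) ≤ γ * (nq * np) := mul_le_mul_of_nonneg_left hS' hγ.le
      _ = (2 * nq * (γ * np)) / 2 := by ring
      _ ≤ (cV / 2 * nq ^ 2 + (γ * np) ^ 2 / (cV / 2)) / 2 := by
          gcongr; exact two_mul_le_mul_sq_add_sq_div (half_pos hcV) _ _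
      _ = cV / 4 * nq ^ 2 + γ ^ 2 / cV * np ^ 2 := by field_simp; ring
  have hq : γ * ε ^ 2 * nq ^ 2 ≤ ε * (cV / 4) * nq ^ 2 := by
    have := mul_le_mul_of_nonneg_right hγε (mul_nonneg hε.le (sq_nonneg nq))
    linarith
  have hp : ε * (1 + γ ^ 2 / cV) * np ^ 2 ≤ γ * θ * (1 - θ) / 2 * np ^ 2 :=
    mul_le_mul_of_nonneg_right hεθ' (sq_nonneg np)
  have hG' : ε * (cV * nq ^ 2 - CV) ≤ ε * G := mul_le_mul_of_nonneg_left hG hε.le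
  have hCV : ε * CV ≤ ε * |CV| := mul_le_mul_of_nonneg_left (le_abs_self CV) hε.le
  have hcross' := mul_le_mul_of_nonneg_left hcross hε.le
  linarith

section

variable {d : ℕ}

local notation "ℝᵈ" => EuclideanSpace ℝ (Fin d)

theorem pdq_exp {Φ : ℝᵈ × ℝᵈ → ℝ} {x : ℝᵈ × ℝᵈ} (hΦ : DifferentiableAt ℝ Φ x) (i : Fin d) :
    pdq i (fun y => exp (Φ y)) x = exp (Φ x) * pdq i Φ x := by
  simp [pdq, fderiv_exp hΦ]

theorem pdp_exp {Φ : ℝᵈ × ℝᵈ → ℝ} {x : ℝᵈ × ℝᵈ} (hΦ : DifferentiableAt ℝ Φ x) (i : Fin d) :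
    pdp i (fun y => exp (Φ y)) x = exp (Φ x) * pdp i Φ x := by
  simp [pdp, fderiv_exp hΦ]

theorem pdp_pdp_exp {Φ : ℝᵈ × ℝᵈ → ℝ} {x : ℝᵈ × ℝᵈ} (hΦ : Differentiable ℝ Φ) (i : Fin d)
    (hΦi : DifferentiableAt ℝ (pdp i Φ) x) :
    pdp i (pdp i fun y => exp (Φ y)) x = exp (Φ x) * (pdp i Φ x ^ 2 + pdp i (pdp i Φ) x) := by
  have h : pdp i (fun y => exp (Φ y)) = fun y => exp (Φ y) * pdp i Φ y :=
    funext fun y => pdp_exp (hΦ y) i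
  rw [h, pdp, fderiv_fun_mul (hΦ x).exp hΦi]
  simp [pdp, fderiv_exp (hΦ x)]
  ring

theorem Lgamma_exp (γ : ℝ) (V : ℝᵈ → ℝ) {Φ : ℝᵈ × ℝᵈ → ℝ} {x : ℝᵈ × ℝᵈ}
    (hΦ : Differentiable ℝ Φ) (hΦp : ∀ i, DifferentiableAt ℝ (pdp i Φ) x) :
    Lgamma γ V (fun y => exp (Φ y)) x
      = exp (Φ x) * (Lgamma γ V Φ x + γ * ∑ i, pdp i Φ x ^ 2) := by
  simp only [Lgamma, pdq_exp (hΦ x), pdp_exp (hΦ x), pdp_pdp_exp hΦ _ (hΦp _)]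
  simp only [mul_left_comm _ (exp (Φ x)), ← Finset.mul_sum, mul_add, Finset.sum_add_distrib]
  ring

noncomputable def lyapunovExponent (V : ℝᵈ → ℝ) (θ ε : ℝ) (y : ℝᵈ × ℝᵈ) : ℝ :=
  θ * (V y.1 + ‖y.2‖ ^ 2 / 2) + ε * ∑ i, y.1 i * y.2 i

theorem hasFDerivAt_lyapunovExponent {V : ℝᵈ → ℝ} (hV : Differentiable ℝ V) (θ ε : ℝ)
    (x : ℝᵈ × ℝᵈ) :
    HasFDerivAt (lyapunovExponent V θ ε)
      (θ • ((fderiv ℝ V x.1).comp (.fst ℝ ℝᵈ ℝᵈ)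
          + (2⁻¹ : ℝ) • (2 • (innerSL ℝ x.2).comp (.snd ℝ ℝᵈ ℝᵈ)))
        + ε • ∑ i, (x.1 i • (EuclideanSpace.proj i).comp (.snd ℝ ℝᵈ ℝᵈ)
          + x.2 i • (EuclideanSpace.proj i).comp (.fst ℝ ℝᵈ ℝᵈ))) x := by
  have hkin := (hasFDerivAt_snd (p := x)).norm_sq.mul_const (2⁻¹ : ℝ)
  have hcross := HasFDerivAt.fun_sum (u := Finset.univ) fun i _ =>
    ((EuclideanSpace.proj i).comp (.fst ℝ ℝᵈ ℝᵈ)).hasFDerivAt.mul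
      ((EuclideanSpace.proj i).comp (.snd ℝ ℝᵈ ℝᵈ)).hasFDerivAt (x := x)
  exact ((((hV x.1).hasFDerivAt.comp x hasFDerivAt_fst).add hkin).const_mul θ).add
    (hcross.const_mul ε)

theorem pdq_lyapunovExponent {V : ℝᵈ → ℝ} (hV : Differentiable ℝ V) (θ ε : ℝ) (i : Fin d)
    (x : ℝᵈ × ℝᵈ) : pdq i (lyapunovExponent V θ ε) x = θ * pd i V x.1 + ε * x.2 i := by
  simp [pdq, pd, (hasFDerivAt_lyapunovExponent hV θ ε x).fderiv, PiLp.single_apply]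

theorem pdp_lyapunovExponent {V : ℝᵈ → ℝ} (hV : Differentiable ℝ V) (θ ε : ℝ) (i : Fin d)
    (x : ℝᵈ × ℝᵈ) : pdp i (lyapunovExponent V θ ε) x = θ * x.2 i + ε * x.1 i := by
  simp [pdp, (hasFDerivAt_lyapunovExponent hV θ ε x).fderiv, PiLp.single_apply,
    EuclideanSpace.inner_single_right]

theorem hasFDerivAt_pdp_lyapunovExponent {V : ℝᵈ → ℝ} (hV : Differentiable ℝ V) (θ ε : ℝ)
    (i : Fin d) (x : ℝᵈ × ℝᵈ) :
    HasFDerivAt (pdp i (lyapunovExponent V θ ε))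
      (θ • (EuclideanSpace.proj i).comp (.snd ℝ ℝᵈ ℝᵈ)
        + ε • (EuclideanSpace.proj i).comp (.fst ℝ ℝᵈ ℝᵈ)) x := by
  rw [show pdp i (lyapunovExponent V θ ε) = _ from funext (pdp_lyapunovExponent hV θ ε i)]
  exact (((EuclideanSpace.proj i).comp (.snd ℝ ℝᵈ ℝᵈ)).hasFDerivAt.const_mul θ).add
    (((EuclideanSpace.proj i).comp (.fst ℝ ℝᵈ ℝᵈ)).hasFDerivAt.const_mul ε)

theorem pdp_pdp_lyapunovExponent {V : ℝᵈ → ℝ} (hV : Differentiable ℝ V) (θ ε : ℝ) (i : Fin d)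
    (x : ℝᵈ × ℝᵈ) : pdp i (pdp i (lyapunovExponent V θ ε)) x = θ := by
  simp [pdp, (hasFDerivAt_pdp_lyapunovExponent hV θ ε i x).fderiv]

theorem neg_Lgamma_exp_lyapunovExponent_div {V : ℝᵈ → ℝ} (hV : Differentiable ℝ V)
    (γ θ ε : ℝ) (x : ℝᵈ × ℝᵈ) :
    -Lgamma γ V (fun y => exp (lyapunovExponent V θ ε y)) x / exp (lyapunovExponent V θ ε x)
      = ε * ∑ i, x.1 i * pd i V x.1 - ε * ‖x.2‖ ^ 2 + γ * θ * (1 - θ) * ‖x.2‖ ^ 2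
        - γ * ε * (2 * θ - 1) * ∑ i, x.1 i * x.2 i - γ * ε ^ 2 * ‖x.1‖ ^ 2 - γ * θ * d := by
  have hΦ : Differentiable ℝ (lyapunovExponent V θ ε) := fun y =>
    (hasFDerivAt_lyapunovExponent hV θ ε y).differentiableAt
  rw [Lgamma_exp γ V hΦ fun i => (hasFDerivAt_pdp_lyapunovExponent hV θ ε i x).differentiableAt,
    neg_div, mul_div_cancel_left₀ _ (exp_pos _).ne']
  have hd : (d : ℝ) = ∑ _i : Fin d, (1 : ℝ) := by simp
  simp only [Lgamma, pdq_lyapunovExponent hV, pdp_lyapunovExponent hV,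
    pdp_pdp_lyapunovExponent hV, EuclideanSpace.real_norm_sq_eq, hd, Finset.mul_sum,
    ← Finset.sum_add_distrib, ← Finset.sum_sub_distrib, ← Finset.sum_neg_distrib]
  exact Finset.sum_congr rfl fun i _ => by ring

end

/-- Lemma `lem:lyapunovlangevin`. Under `q·∇V(q) ≥ c_V|q|² − C_V`, for every
`γ > 0` and `θ ∈ (0,1)` there are `ε > 0` and `a, b, C > 0` such that
`W(q,p) = exp(θH(q,p) + ε q·p)` satisfies `−(L_γ W)/W ≥ a|q|² + b|p|² − C`. -/
theorem stmt3 (d : ℕ) (V : EuclideanSpace ℝ (Fin d) → ℝ) (hV : ContDiff ℝ 1 V)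
    (cV : ℝ) (hcV : 0 < cV) (CV : ℝ)
    (hconf : ∀ q : EuclideanSpace ℝ (Fin d), cV * ‖q‖ ^ 2 - CV ≤ ∑ i, q i * pd i V q) :
    ∀ γ : ℝ, 0 < γ → ∀ θ : ℝ, θ ∈ Set.Ioo (0:ℝ) 1 →
      ∃ ε : ℝ, 0 < ε ∧ ∃ a : ℝ, 0 < a ∧ ∃ b : ℝ, 0 < b ∧ ∃ C : ℝ, 0 < C ∧
        ∀ x : EuclideanSpace ℝ (Fin d) × EuclideanSpace ℝ (Fin d),
          a * ‖x.1‖ ^ 2 + b * ‖x.2‖ ^ 2 - C ≤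
            -(Lgamma γ V
                (fun y => Real.exp (θ * (V y.1 + ‖y.2‖ ^ 2 / 2) + ε * ∑ i, y.1 i * y.2 i)) x)
              / Real.exp (θ * (V x.1 + ‖x.2‖ ^ 2 / 2) + ε * ∑ i, x.1 i * x.2 i) := by
  intro γ hγ θ ⟨hθ0, hθ1⟩
  set ε := min (cV / (4 * γ)) (γ * θ * (1 - θ) / (2 * (1 + γ ^ 2 / cV)))
  have hε : 0 < ε := lt_min (by positivity) (by positivity)
  refine ⟨ε, hε, ε * cV / 2, by positivity, γ * θ * (1 - θ) / 2, by positivity,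
    ε * |CV| + γ * θ * d + 1, by positivity, fun x => ?_⟩
  have hdrift := drift_lower_bound hγ hθ0 hθ1 hcV hε (min_le_left _ _) (min_le_right _ _)
    (hconf x.1) (abs_sum_mul_le_norm_mul_norm x.1 x.2)
  refine le_of_le_of_eq ?_
    (neg_Lgamma_exp_lyapunovExponent_div (hV.differentiable one_ne_zero) γ θ ε x).symm
  linarith
end
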